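/- Let G be a 2-connected finitely separable graph, let M be a matroid on the edge set of G whose circuits are exactly the edge sets of (finite) cycles of G, let X be a set of edges of G and Y := E(G) ∖ X with V[X] ∩ V[Y] finite. If both (V[X], X) and (V[Y], Y) are connected subgraphs (i.e. c(X) = c(Y) = 1), then κ_M(X) = |V[X] ∩ V[Y]| − 1. -/

import Mathlib

open scoped Matroid

variable {V : Type*} {α : Type*}

/-- The set of vertices incident with an edge in `X`. -/
def vertsOf (X : Set (Sym2 V)) : Set V := {v | ∃ e ∈ X, v ∈ e}

/-- A graph is finitely separable if any two distinct vertices can be separated by deleting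
finitely many edges. -/
def FinitelySeparable (G : SimpleGraph V) : Prop :=
  ∀ u v : V, u ≠ v → ∃ F : Set (Sym2 V), F.Finite ∧ ¬ (G.deleteEdges F).Reachable u v

/-- `C` is the edge set of a (finite) cycle of `G`. -/
def IsCycleEdgeSet (G : SimpleGraph V) (C : Set (Sym2 V)) : Prop :=
  ∃ (v : V) (w : G.Walk v v), w.IsCycle ∧ C = {e | e ∈ w.edges}

/-- `M` is the finite-cycle matroid of `G` : its ground set is the edge set of `G` and a set
of edges is independent iff it contains no edge set of a cycle of `G` (equivalently, the
circuits of `M` are precisely the edge sets of cycles of `G`). -/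
def IsFiniteCycleMatroid (G : SimpleGraph V) (M : Matroid (Sym2 V)) : Prop :=
  M.E = G.edgeSet ∧
    ∀ I, M.Indep I ↔ I ⊆ G.edgeSet ∧ ∀ C, IsCycleEdgeSet G C → ¬ C ⊆ I

/-- `F` arises in the definition of the connectivity function `κ_M(X)`: there are a base `B`
of `M|X` and a base `B'` of `M|(E \ X)` with `F ⊆ B ∪ B'` and `(B ∪ B') \ F` a base of `M`;
the connectivity `κ_M(X)` is then `F.encard`. -/
def ConnWitness (M : Matroid α) (X F : Set α) : Prop :=
  ∃ B B', (M ↾ X).IsBase B ∧ (M ↾ (M.E \ X)).IsBase B' ∧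
    F ⊆ B ∪ B' ∧ M.IsBase ((B ∪ B') \ F)

/-- The (vertex sets of the) connected components of the subgraph `(V[X], X)`. -/
def components (X : Set (Sym2 V)) : Set (Set V) :=
  {C | ∃ v ∈ vertsOf X, C = {w | (SimpleGraph.fromEdgeSet X).Reachable v w}}

/-- The subgraph `(V[X], X)` is connected (in particular nonempty). -/
def SubConnected (X : Set (Sym2 V)) : Prop :=
  (vertsOf X).Nonempty ∧
    ∀ u ∈ vertsOf X, ∀ w ∈ vertsOf X, (SimpleGraph.fromEdgeSet X).Reachable u w

/-- The edges of `X` lying inside the vertex set `K`. -/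
def edgesIn (X : Set (Sym2 V)) (K : Set V) : Set (Sym2 V) :=
  {e | e ∈ X ∧ ∀ v ∈ e, v ∈ K}

/-- `G` is 2-connected: connected, more than two vertices, and still connected after
deleting any one vertex. -/
def TwoConnected (G : SimpleGraph V) : Prop :=
  G.Connected ∧ 2 < (Set.univ : Set V).encard ∧
    ∀ v : V, (G.induce ({v}ᶜ : Set V)).Connected

/-- An `ℓ`-Tutte-separation of `G`: a partition `(X, Y)` of the edge set with at least `ℓ`
edges on each side and at most `ℓ` vertices incident both with an edge of `X` and with an
edge of `Y`. -/
def TutteSep (G : SimpleGraph V) (ℓ : ℕ) (X Y : Set (Sym2 V)) : Prop :=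
  X ∪ Y = G.edgeSet ∧ Disjoint X Y ∧ (ℓ : ℕ∞) ≤ X.encard ∧ (ℓ : ℕ∞) ≤ Y.encard ∧
    (vertsOf X ∩ vertsOf Y).encard ≤ (ℓ : ℕ∞)

/-- `G` is `k`-Tutte-connected: it has no `ℓ`-Tutte-separation for any `1 ≤ ℓ < k`. -/
def TutteConnected (G : SimpleGraph V) (k : ℕ) : Prop :=
  ∀ ℓ : ℕ, 1 ≤ ℓ → ℓ < k → ∀ X Y : Set (Sym2 V), ¬ TutteSep G ℓ X Y

/-- An `ℓ`-separation of the matroid `M`: a partition `(X, Y)` of the ground set with at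
least `ℓ` elements on each side and `κ_M(X) ≤ ℓ - 1`. -/
def MatSep (M : Matroid α) (ℓ : ℕ) (X Y : Set α) : Prop :=
  X ∪ Y = M.E ∧ Disjoint X Y ∧ (ℓ : ℕ∞) ≤ X.encard ∧ (ℓ : ℕ∞) ≤ Y.encard ∧
    ∀ F, ConnWitness M X F → F.encard + 1 ≤ (ℓ : ℕ∞)

/-- `M` is `k`-connected: it has no `ℓ`-separation for any `1 ≤ ℓ < k`. -/
def MatConnected (M : Matroid α) (k : ℕ) : Prop :=
  ∀ ℓ : ℕ, 1 ≤ ℓ → ℓ < k → ∀ X Y : Set α, ¬ MatSep M ℓ X Y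

/-! ### Auxiliary machinery -/

open SimpleGraph Set

namespace KappaAux

variable {V : Type*}

/-- Induction along reachability. -/
lemma reach_ind {Γ : SimpleGraph V} {P : V → Prop}
    (h : ∀ u w, P u → Γ.Adj u w → P w) :
    ∀ {u v : V}, Γ.Reachable u v → P u → P v := by
  intro u v r hu
  obtain ⟨w⟩ := r
  induction w with
  | nil => exact hu
  | cons ha p ih => exact ih (h _ _ hu ha)

lemma reach_step {Γ Δ : SimpleGraph V} (hstep : ∀ u v, Γ.Adj u v → Δ.Reachable u v) :
    ∀ {a b : V}, Γ.Reachable a b → Δ.Reachable a b := by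
  intro a b r
  exact reach_ind (P := fun w => Δ.Reachable a w)
    (fun u w hu ha => hu.trans (hstep u w ha)) r (Reachable.refl a)

lemma mem_vertsOf_left {X : Set (Sym2 V)} {u v : V} (h : s(u,v) ∈ X) : u ∈ vertsOf X :=
  ⟨s(u,v), h, Sym2.mem_mk_left u v⟩

lemma mem_vertsOf_right {X : Set (Sym2 V)} {u v : V} (h : s(u,v) ∈ X) : v ∈ vertsOf X :=
  ⟨s(u,v), h, Sym2.mem_mk_right u v⟩

lemma vertsOf_mono {X Y : Set (Sym2 V)} (h : X ⊆ Y) : vertsOf X ⊆ vertsOf Y :=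
  fun _ ⟨e, he, hv⟩ => ⟨e, h he, hv⟩

lemma reach_mem_vertsOf {A : Set (Sym2 V)} {a b : V}
    (r : (SimpleGraph.fromEdgeSet A).Reachable a b) (h : a ≠ b) : b ∈ vertsOf A := by
  have : b = a ∨ b ∈ vertsOf A := by
    refine reach_ind (P := fun w => w = a ∨ w ∈ vertsOf A) ?_ r (Or.inl rfl)
    intro u w _ haw
    rw [SimpleGraph.fromEdgeSet_adj] at haw
    exact Or.inr (mem_vertsOf_right haw.1)
  exact this.resolve_left (Ne.symm h)

/-- Independent sets of the finite-cycle matroid span acyclic subgraphs. -/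
lemma indep_isAcyclic {G : SimpleGraph V} {M : Matroid (Sym2 V)}
    (hM : IsFiniteCycleMatroid G M) {I : Set (Sym2 V)} (hI : M.Indep I) :
    (SimpleGraph.fromEdgeSet I).IsAcyclic := by
  intro v w hw
  obtain ⟨hIE, hnc⟩ := (hM.2 I).1 hI
  have hedges : ∀ e ∈ w.edges, e ∈ G.edgeSet := by
    intro e he
    have h1 := w.edges_subset_edgeSet he
    rw [SimpleGraph.edgeSet_fromEdgeSet] at h1
    exact hIE h1.1
  refine hnc {e | e ∈ (w.transfer G hedges).edges} ⟨v, w.transfer G hedges, hw.transfer hedges, rfl⟩ ?_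
  intro e he
  rw [Set.mem_setOf_eq, SimpleGraph.Walk.edges_transfer] at he
  have h1 := w.edges_subset_edgeSet he
  rw [SimpleGraph.edgeSet_fromEdgeSet] at h1
  exact h1.1

/-- One step of reachability from maximality of a base. -/
lemma base_step {G : SimpleGraph V} {M : Matroid (Sym2 V)} (hM : IsFiniteCycleMatroid G M)
    {B X' : Set (Sym2 V)} (hBi : M.Indep B) (hBX : B ⊆ X') (hX'e : X' ⊆ G.edgeSet)
    (hmax : ∀ e ∈ X', e ∉ B → ¬ M.Indep (insert e B)) :
    ∀ u v : V, s(u,v) ∈ X' → (SimpleGraph.fromEdgeSet B).Reachable u v := by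
  intro u v he
  have hne : u ≠ v := by
    intro h
    exact G.not_isDiag_of_mem_edgeSet (hX'e he) (by simp [h])
  by_cases hB : s(u,v) ∈ B
  · exact ((SimpleGraph.fromEdgeSet_adj _).2 ⟨hB, hne⟩).reachable
  · have hdep := hmax _ he hB
    have hsub : insert s(u,v) B ⊆ G.edgeSet := Set.insert_subset (hX'e he) (hBX.trans hX'e)
    have hex : ∃ C, IsCycleEdgeSet G C ∧ C ⊆ insert s(u,v) B := by
      by_contra h
      push_neg at h
      exact hdep ((hM.2 _).2 ⟨hsub, fun C hC hsub' => h C hC hsub'⟩)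
    obtain ⟨C, ⟨v₀, w, hw, rfl⟩, hCsub⟩ := hex
    have heC : s(u,v) ∈ w.edges := by
      by_contra hec
      refine ((hM.2 B).1 hBi).2 _ ⟨v₀, w, hw, rfl⟩ ?_
      intro e he'
      rcases hCsub he' with h | h
      · exact absurd (h ▸ he') hec
      · exact h
    have hedges : ∀ e ∈ w.edges, e ∈ (SimpleGraph.fromEdgeSet (insert s(u,v) B)).edgeSet := by
      intro e he'
      rw [SimpleGraph.edgeSet_fromEdgeSet]
      exact ⟨hCsub he', G.not_isDiag_of_mem_edgeSet (w.edges_subset_edgeSet he')⟩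
    have hcyc : ∃ (u' : V) (p : (SimpleGraph.fromEdgeSet (insert s(u,v) B)).Walk u' u'),
        p.IsCycle ∧ s(u,v) ∈ p.edges :=
      ⟨v₀, w.transfer _ hedges, hw.transfer hedges, by rwa [SimpleGraph.Walk.edges_transfer]⟩
    have hreach := (SimpleGraph.adj_and_reachable_delete_edges_iff_exists_cycle.2 hcyc).2
    refine hreach.mono ?_
    intro a b hab
    rw [SimpleGraph.deleteEdges_adj, SimpleGraph.fromEdgeSet_adj] at hab
    obtain ⟨⟨hab1, hne'⟩, hab2⟩ := hab
    rw [SimpleGraph.fromEdgeSet_adj]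
    refine ⟨?_, hne'⟩
    rcases hab1 with h | h
    · exact absurd (show s(a,b) ∈ ({s(u,v)} : Set (Sym2 V)) by simp [h]) hab2
    · exact h

lemma exists_first_edge {Γ : SimpleGraph V} {u v : V} (w : Γ.Walk u v) (h : u ≠ v) :
    ∃ e ∈ w.edges, u ∈ e := by
  cases w with
  | nil => exact absurd rfl h
  | @cons _ x _ ha p =>
    refine ⟨s(u, x), ?_, Sym2.mem_mk_left _ _⟩
    rw [SimpleGraph.Walk.edges_cons]
    exact List.mem_cons_self

/-- In an acyclic ambient edge set, two reachability witnesses through subsets share an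
edge at the starting vertex. -/
lemma exists_common_edge {T A1 A2 : Set (Sym2 V)}
    (hT : (SimpleGraph.fromEdgeSet T).IsAcyclic)
    (h1 : A1 ⊆ T) (h2 : A2 ⊆ T) {u v : V} (hne : u ≠ v)
    (r1 : (SimpleGraph.fromEdgeSet A1).Reachable u v)
    (r2 : (SimpleGraph.fromEdgeSet A2).Reachable u v) :
    ∃ e, e ∈ A1 ∧ e ∈ A2 ∧ u ∈ e := by
  classical
  obtain ⟨w1⟩ := r1
  obtain ⟨w2⟩ := r2
  have t1 : ∀ e ∈ w1.edges, e ∈ (SimpleGraph.fromEdgeSet T).edgeSet := by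
    intro e he
    have h := w1.edges_subset_edgeSet he
    rw [SimpleGraph.edgeSet_fromEdgeSet] at h ⊢
    exact ⟨h1 h.1, h.2⟩
  have t2 : ∀ e ∈ w2.edges, e ∈ (SimpleGraph.fromEdgeSet T).edgeSet := by
    intro e he
    have h := w2.edges_subset_edgeSet he
    rw [SimpleGraph.edgeSet_fromEdgeSet] at h ⊢
    exact ⟨h2 h.1, h.2⟩
  have hpq : (w1.transfer _ t1).toPath = (w2.transfer _ t2).toPath :=
    SimpleGraph.isAcyclic_iff_path_unique.1 hT _ _
  obtain ⟨e, heP, heu⟩ := exists_first_edge ((w1.transfer _ t1).toPath : (SimpleGraph.fromEdgeSet T).Walk u v) hne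
  have he1 : e ∈ w1.edges := by
    have := SimpleGraph.Walk.edges_toPath_subset _ heP
    rwa [SimpleGraph.Walk.edges_transfer] at this
  have he2 : e ∈ w2.edges := by
    have heP2 : e ∈ ((w2.transfer _ t2).toPath : (SimpleGraph.fromEdgeSet T).Walk u v).edges := by
      rw [← hpq]; exact heP
    have := SimpleGraph.Walk.edges_toPath_subset _ heP2
    rwa [SimpleGraph.Walk.edges_transfer] at this
  have m1 := w1.edges_subset_edgeSet he1
  have m2 := w2.edges_subset_edgeSet he2
  rw [SimpleGraph.edgeSet_fromEdgeSet] at m1 m2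
  exact ⟨e, m1.1, m2.1, heu⟩

/-- Every component of the forest `B \ F` on the `X`-side meets `V[X] ∩ V[Y]`. -/
lemma comp_meets_S {B B' F X Y : Set (Sym2 V)}
    (hBX : B ⊆ X) (hB'Y : B' ⊆ Y)
    (hTreach : ∀ a b : V, (SimpleGraph.fromEdgeSet ((B \ F) ∪ (B' \ F))).Reachable a b)
    (hYne : (vertsOf Y).Nonempty) :
    ∀ v ∈ vertsOf X, ∃ s ∈ vertsOf X ∩ vertsOf Y,
      (SimpleGraph.fromEdgeSet (B \ F)).Reachable s v := by
  intro v hv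
  set K := {w | (SimpleGraph.fromEdgeSet (B \ F)).Reachable v w} with hK
  have hKX : K ⊆ vertsOf X := by
    intro w hw
    rcases eq_or_ne v w with rfl | hne
    · exact hv
    · exact vertsOf_mono ((Set.diff_subset).trans hBX) (reach_mem_vertsOf hw hne)
  by_cases hexists : ∃ u ∈ K, u ∈ vertsOf Y
  · obtain ⟨u, huK, huY⟩ := hexists
    exact ⟨u, ⟨hKX huK, huY⟩, (huK : (SimpleGraph.fromEdgeSet (B \ F)).Reachable v u).symm⟩
  · exfalso
    push_neg at hexists
    have hclosed : ∀ a b : V, a ∈ K →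
        (SimpleGraph.fromEdgeSet ((B \ F) ∪ (B' \ F))).Adj a b → b ∈ K := by
      intro a b ha hab
      rw [SimpleGraph.fromEdgeSet_adj] at hab
      obtain ⟨he, hne⟩ := hab
      rcases he with h | h
      · exact Reachable.trans ha ((SimpleGraph.fromEdgeSet_adj _).2 ⟨h, hne⟩).reachable
      · exact absurd (vertsOf_mono ((Set.diff_subset).trans hB'Y) (mem_vertsOf_left h))
          (hexists a ha)
    obtain ⟨u', hu'⟩ := hYne
    have hmem : u' ∈ K :=
      reach_ind hclosed (hTreach v u') (show v ∈ K from Reachable.refl v)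
    exact hexists u' hmem hu'

/-- The setoid on `S` induced by reachability through the edge set `A`. -/
def reachSetoid (A : Set (Sym2 V)) (S : Set V) : Setoid ↥S where
  r s t := (SimpleGraph.fromEdgeSet A).Reachable s t
  iseqv := ⟨fun _ => Reachable.refl _, Reachable.symm, Reachable.trans⟩

lemma reachSetoid_r {A : Set (Sym2 V)} {S : Set V} {s t : ↥S} :
    (reachSetoid A S).r s t ↔ (SimpleGraph.fromEdgeSet A).Reachable s t := Iff.rfl

/-- The quotient graph of one side: vertices are classes, edges come from `E0`. -/
def sideGraph {α : Type*} (cX : V → α) (E0 : Set (Sym2 V)) : SimpleGraph α where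
  Adj c c' := c ≠ c' ∧ ∃ g ∈ E0, Sym2.map cX g = s(c, c')
  symm := by
    constructor
    rintro c c' ⟨hne, g, hg, hmap⟩
    exact ⟨hne.symm, g, hg, hmap.trans Sym2.eq_swap⟩
  loopless := ⟨fun c h => h.1 rfl⟩

lemma sideGraph_adj {α : Type*} (cX : V → α) (E0 : Set (Sym2 V)) (c c' : α) :
    (sideGraph cX E0).Adj c c' ↔ c ≠ c' ∧ ∃ g ∈ E0, Sym2.map cX g = s(c, c') := Iff.rfl

/-- Counting components of `B \ F` against `F ∩ B` on one side. -/
lemma sideCount {B F : Set (Sym2 V)} {S : Set V}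
    (hS : S.Finite) (hSne : Nonempty ↥S)
    (hac : (SimpleGraph.fromEdgeSet B).IsAcyclic)
    (hdiag : ∀ e ∈ B, ¬ e.IsDiag)
    (hrep : ∀ v ∈ vertsOf B, ∃ s : ↥S, (SimpleGraph.fromEdgeSet (B \ F)).Reachable s v)
    (hSB : ∀ s : ↥S, (s : V) ∈ vertsOf B)
    (hreach : ∀ s t : ↥S, (SimpleGraph.fromEdgeSet B).Reachable s t) :
    (F ∩ B).Finite ∧
      Nat.card (Quotient (reachSetoid (B \ F) S)) = (F ∩ B).ncard + 1 := by
  classical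
  have hSfin : Finite ↥S := hS
  set sX := reachSetoid (B \ F) S with hsX
  letI : Finite (Quotient sX) := Quotient.finite _
  choose rep hrepspec using hrep
  set cX : V → Quotient sX := fun v =>
    if h : v ∈ vertsOf B then Quotient.mk sX (rep v h) else Quotient.mk sX hSne.some
    with hcXdef
  have hcXspec : ∀ (v) (h : v ∈ vertsOf B),
      (SimpleGraph.fromEdgeSet (B \ F)).Reachable (rep v h) v ∧
        cX v = Quotient.mk sX (rep v h) := by
    intro v h
    exact ⟨hrepspec v h, by simp only [hcXdef, dif_pos h]⟩
  have hmk_eq : ∀ s t : ↥S, (SimpleGraph.fromEdgeSet (B \ F)).Reachable s t →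
      Quotient.mk sX s = Quotient.mk sX t := fun s t h => Quotient.sound h
  have hcX_eq : ∀ u v, u ∈ vertsOf B → v ∈ vertsOf B →
      (SimpleGraph.fromEdgeSet (B \ F)).Reachable u v → cX u = cX v := by
    intro u v hu hv r
    obtain ⟨ru, hu'⟩ := hcXspec u hu
    obtain ⟨rv, hv'⟩ := hcXspec v hv
    rw [hu', hv']
    exact hmk_eq _ _ (ru.trans (r.trans rv.symm))
  have hcX_mk : ∀ s : ↥S, cX (s : V) = Quotient.mk sX s := by
    intro s
    obtain ⟨r, h⟩ := hcXspec (s : V) (hSB s)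
    rw [h]
    exact hmk_eq _ _ r
  have hcls : ∀ u v, u ∈ vertsOf B → v ∈ vertsOf B → cX u = cX v →
      (SimpleGraph.fromEdgeSet (B \ F)).Reachable u v := by
    intro u v hu hv h
    obtain ⟨ru, hu'⟩ := hcXspec u hu
    obtain ⟨rv, hv'⟩ := hcXspec v hv
    rw [hu', hv'] at h
    exact ru.symm.trans (Reachable.trans (Quotient.exact h) rv)
  have hone : ∀ (p q : V) (A : Set (Sym2 V)), s(p,q) ∈ A → p ≠ q →
      (SimpleGraph.fromEdgeSet A).Reachable p q := fun p q A h hne =>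
    ((SimpleGraph.fromEdgeSet_adj _).2 ⟨h, hne⟩).reachable
  have hgood : ∀ p q : V, s(p,q) ∈ F ∩ B → cX p ≠ cX q := by
    intro p q hg hEq
    have hp : p ∈ vertsOf B := mem_vertsOf_left hg.2
    have hq : q ∈ vertsOf B := mem_vertsOf_right hg.2
    have hpq : p ≠ q := fun h => hdiag _ hg.2 (by simp [h])
    obtain ⟨e, he1, he2, -⟩ := exists_common_edge hac
      (show {s(p,q)} ⊆ B by simp [hg.2]) Set.diff_subset hpq
      (hone p q _ rfl hpq) (hcls p q hp hq hEq)
    rw [Set.mem_singleton_iff] at he1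
    exact he2.2 (he1 ▸ hg.1)
  set H : SimpleGraph (Quotient sX) := sideGraph cX (F ∩ B) with hH
  have hedge : H.edgeSet = Sym2.map cX '' (F ∩ B) := by
    apply Set.Subset.antisymm
    · intro e he
      induction e using Sym2.ind with
      | _ c c' =>
        obtain ⟨-, g, hg, hmap⟩ := (H.mem_edgeSet).1 he
        exact ⟨g, hg, hmap⟩
    · rintro e ⟨g, hg, rfl⟩
      induction g using Sym2.ind with
      | _ p q =>
        rw [Sym2.map_pair_eq]
        exact (H.mem_edgeSet).2 ⟨hgood p q hg, s(p,q), hg, Sym2.map_pair_eq _ _ _⟩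
  have key : ∀ p q p' q' : V, s(p,q) ∈ F ∩ B → s(p',q') ∈ F ∩ B →
      cX p = cX p' → cX q = cX q' → s(p,q) = s(p',q') := by
    intro p q p' q' hg hg' h1 h2
    by_contra hne
    have hp : p ∈ vertsOf B := mem_vertsOf_left hg.2
    have hq : q ∈ vertsOf B := mem_vertsOf_right hg.2
    have hp' : p' ∈ vertsOf B := mem_vertsOf_left hg'.2
    have hq' : q' ∈ vertsOf B := mem_vertsOf_right hg'.2
    have hpq : p ≠ q := fun h => hdiag _ hg.2 (by simp [h])
    have hp'q' : p' ≠ q' := fun h => hdiag _ hg'.2 (by simp [h])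
    have hRpp' := hcls p p' hp hp' h1
    have hRqq' := hcls q q' hq hq' h2
    have hsub1 : B \ F ⊆ (B \ F) ∪ {s(p',q')} := Set.subset_union_left
    have r2 : (SimpleGraph.fromEdgeSet ((B \ F) ∪ {s(p',q')})).Reachable p q :=
      ((hRpp'.mono (SimpleGraph.fromEdgeSet_mono hsub1)).trans
        (hone p' q' _ (Set.mem_union_right _ rfl) hp'q')).trans
        ((hRqq'.mono (SimpleGraph.fromEdgeSet_mono hsub1)).symm)
    obtain ⟨e, he1, he2, -⟩ := exists_common_edge hac
      (show {s(p,q)} ⊆ B by simp [hg.2])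
      (Set.union_subset Set.diff_subset (by simp [hg'.2])) hpq
      (hone p q _ rfl hpq) r2
    rw [Set.mem_singleton_iff] at he1
    subst he1
    rcases he2 with h | h
    · exact h.2 hg.1
    · exact hne h
  have hinj : Set.InjOn (Sym2.map cX) (F ∩ B) := by
    intro g hg g' hg' hEq
    induction g using Sym2.ind with
    | _ p q =>
      induction g' using Sym2.ind with
      | _ p' q' =>
        rw [Sym2.map_pair_eq, Sym2.map_pair_eq, Sym2.eq_iff] at hEq
        rcases hEq with ⟨h1, h2⟩ | ⟨h1, h2⟩
        · exact key p q p' q' hg hg' h1 h2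
        · exact (key p q q' p' hg (Sym2.eq_swap ▸ hg') h1 h2).trans Sym2.eq_swap
  letI : Finite (Sym2 (Quotient sX)) :=
    Finite.of_surjective (fun x : (Quotient sX) × (Quotient sX) => s(x.1, x.2))
      (fun z => Sym2.ind (fun x y => ⟨(x, y), rfl⟩) z)
  have hfinE : H.edgeSet.Finite := Set.toFinite _
  have hFBfin : (F ∩ B).Finite := Set.Finite.of_finite_image (hedge ▸ hfinE) hinj
  have hpre : ∀ s t : ↥S, H.Reachable (Quotient.mk sX s) (Quotient.mk sX t) := by
    intro s t
    have main : (t : V) ∈ vertsOf B ∧ H.Reachable (cX (s : V)) (cX (t : V)) := by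
      refine reach_ind (Γ := SimpleGraph.fromEdgeSet B)
        (P := fun w => w ∈ vertsOf B ∧ H.Reachable (cX (s : V)) (cX w)) ?_ (hreach s t)
        ⟨hSB s, Reachable.refl _⟩
      intro a b hPa hab
      rw [SimpleGraph.fromEdgeSet_adj] at hab
      obtain ⟨hgB, hne⟩ := hab
      have ha : a ∈ vertsOf B := mem_vertsOf_left hgB
      have hb : b ∈ vertsOf B := mem_vertsOf_right hgB
      refine ⟨hb, hPa.2.trans ?_⟩
      by_cases hgF : s(a,b) ∈ F
      · rcases eq_or_ne (cX a) (cX b) with h | h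
        · rw [h]
        · exact (show H.Adj (cX a) (cX b) from
            ⟨h, s(a,b), ⟨hgF, hgB⟩, Sym2.map_pair_eq _ _ _⟩).reachable
      · rw [hcX_eq a b ha hb (hone a b _ ⟨hgB, hgF⟩ hne)]
    have := main.2
    rwa [hcX_mk, hcX_mk] at this
  have hconn : H.Connected := by
    rw [SimpleGraph.connected_iff]
    refine ⟨?_, ⟨Quotient.mk sX hSne.some⟩⟩
    intro c c'
    obtain ⟨s, rfl⟩ := Quotient.exists_rep c
    obtain ⟨t, rfl⟩ := Quotient.exists_rep c'
    exact hpre s t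
  have hacH : H.IsAcyclic := by
    rw [SimpleGraph.isAcyclic_iff_forall_edge_isBridge]
    intro e he
    rw [hedge] at he
    obtain ⟨g, hg, rfl⟩ := he
    induction g using Sym2.ind with
    | _ x y =>
      rw [Sym2.map_pair_eq]
      have hxy : x ≠ y := fun h => hdiag _ hg.2 (by simp [h])
      have hx : x ∈ vertsOf B := mem_vertsOf_left hg.2
      have hy : y ∈ vertsOf B := mem_vertsOf_right hg.2
      rw [SimpleGraph.isBridge_iff]
      intro hreach'
      have hmono0 : B \ F ⊆ B \ {s(x,y)} :=
        Set.diff_subset_diff_right (Set.singleton_subset_iff.2 hg.1)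
      -- potential: the class contains a rep reachable from x avoiding the edge s(x,y)
      set P : Quotient sX → Prop := fun c => ∃ t : ↥S, Quotient.mk sX t = c ∧
        (SimpleGraph.fromEdgeSet (B \ {s(x,y)})).Reachable x t with hPdef
      have hPiff : ∀ v (h : v ∈ vertsOf B),
          (P (cX v) ↔ (SimpleGraph.fromEdgeSet (B \ {s(x,y)})).Reachable x v) := by
        intro v h
        obtain ⟨rv, hv'⟩ := hcXspec v h
        constructor
        · rintro ⟨t, ht, hR⟩
          rw [hv'] at ht
          have htr : (SimpleGraph.fromEdgeSet (B \ F)).Reachable t (rep v h) :=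
            Quotient.exact ht
          exact (hR.trans (htr.mono (SimpleGraph.fromEdgeSet_mono hmono0))).trans
            (rv.mono (SimpleGraph.fromEdgeSet_mono hmono0))
        · intro hR
          exact ⟨rep v h, hv'.symm,
            hR.trans ((rv.mono (SimpleGraph.fromEdgeSet_mono hmono0)).symm)⟩
      have hPx : P (cX x) := (hPiff x hx).2 (Reachable.refl x)
      have hPy : ¬ P (cX y) := by
        rw [hPiff y hy]
        intro hy'
        obtain ⟨e, he1, he2, -⟩ := exists_common_edge hac
          (show {s(x,y)} ⊆ B by simp [hg.2]) Set.diff_subset hxy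
          (hone x y _ rfl hxy) hy'
        rw [Set.mem_singleton_iff] at he1
        exact he2.2 (by rw [he1]; exact rfl)
      have hstep : ∀ c c', P c → (H.deleteEdges {s(cX x, cX y)}).Adj c c' → P c' := by
        intro c c' hPc hcc
        rw [SimpleGraph.deleteEdges_adj] at hcc
        obtain ⟨⟨hnecc, g', hg', hmap⟩, hnot⟩ := hcc
        have hne_e : s(c, c') ≠ s(cX x, cX y) := by
          intro h
          exact hnot (by simp [h])
        have hg'ne : g' ≠ s(x,y) := by
          intro h
          apply hne_e
          rw [← hmap, h, Sym2.map_pair_eq]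
        induction g' using Sym2.ind with
        | _ p q =>
          have hp := mem_vertsOf_left hg'.2
          have hq := mem_vertsOf_right hg'.2
          have hpqne : p ≠ q := fun h => hdiag _ hg'.2 (by simp [h])
          have hadj : (SimpleGraph.fromEdgeSet (B \ {s(x,y)})).Reachable p q :=
            hone p q _ ⟨hg'.2, by simpa using hg'ne⟩ hpqne
          rw [Sym2.map_pair_eq, Sym2.eq_iff] at hmap
          rcases hmap with ⟨h1, h2⟩ | ⟨h1, h2⟩
          · rw [← h2]
            rw [← h1, hPiff p hp] at hPc
            exact (hPiff q hq).2 (hPc.trans hadj)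
          · rw [← h1]
            rw [← h2, hPiff q hq] at hPc
            exact (hPiff p hp).2 (hPc.trans hadj.symm)
      exact hPy (reach_ind hstep hreach' hPx)
  letI : Fintype (Quotient sX) := Fintype.ofFinite _
  letI : Fintype ↥H.edgeSet := Fintype.ofFinite _
  have hcard := SimpleGraph.IsTree.card_edgeFinset ⟨hconn, hacH⟩
  have h1 : H.edgeSet.ncard = (F ∩ B).ncard := by
    rw [hedge, Set.ncard_image_of_injOn hinj]
  have h2 : H.edgeFinset.card = H.edgeSet.ncard := by
    rw [← SimpleGraph.coe_edgeFinset, Set.ncard_coe_finset]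
  have h3 : Nat.card (Quotient sX) = Fintype.card (Quotient sX) := Nat.card_eq_fintype_card
  refine ⟨hFBfin, ?_⟩
  rw [h3, ← hcard, h2, h1]


/-- The bipartite gluing graph of two quotients along a common index set. -/
def glueGraph {ι α β : Type*} (mkX : ι → α) (mkY : ι → β) : SimpleGraph (α ⊕ β) where
  Adj z z' := ∃ t : ι, s(z, z') = s(Sum.inl (mkX t), Sum.inr (mkY t))
  symm := by
    constructor
    rintro z z' ⟨t, ht⟩
    exact ⟨t, (Sym2.eq_swap).trans ht⟩
  loopless := by
    constructor
    rintro z ⟨t, ht⟩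
    rw [Sym2.eq_iff] at ht
    rcases ht with ⟨h1, h2⟩ | ⟨h1, h2⟩ <;> exact absurd (h1.symm.trans h2) (by simp)

lemma mainCount {B B' F : Set (Sym2 V)} {S : Set V}
    (hS : S.Finite) (hSne : Nonempty ↥S)
    (hac : (SimpleGraph.fromEdgeSet ((B \ F) ∪ (B' \ F))).IsAcyclic)
    (hTreach : ∀ a b : V, (SimpleGraph.fromEdgeSet ((B \ F) ∪ (B' \ F))).Reachable a b)
    (hdisj : Disjoint (B \ F) (B' \ F))
    (hrepX : ∀ v ∈ vertsOf (B \ F), ∃ s : ↥S,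
      (SimpleGraph.fromEdgeSet (B \ F)).Reachable s v)
    (hrepY : ∀ v ∈ vertsOf (B' \ F), ∃ s : ↥S,
      (SimpleGraph.fromEdgeSet (B' \ F)).Reachable s v)
    (hcross : ∀ v, v ∈ vertsOf (B \ F) → v ∈ vertsOf (B' \ F) → v ∈ S) :
    Nat.card (Quotient (reachSetoid (B \ F) S)) +
      Nat.card (Quotient (reachSetoid (B' \ F) S)) = S.ncard + 1 := by
  classical
  have hSfin : Finite ↥S := hS
  set sX := reachSetoid (B \ F) S with hsX
  set sY := reachSetoid (B' \ F) S with hsY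
  letI : Finite (Quotient sX) := Quotient.finite _
  letI : Finite (Quotient sY) := Quotient.finite _
  set f : ↥S → Sym2 (Quotient sX ⊕ Quotient sY) := fun t =>
    s(Sum.inl (Quotient.mk sX t), Sum.inr (Quotient.mk sY t)) with hf
  set H : SimpleGraph (Quotient sX ⊕ Quotient sY) :=
    glueGraph (fun t : ↥S => Quotient.mk sX t) (fun t : ↥S => Quotient.mk sY t) with hH
  have hadj : ∀ t : ↥S, H.Adj (Sum.inl (Quotient.mk sX t)) (Sum.inr (Quotient.mk sY t)) :=
    fun t => ⟨t, rfl⟩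
  have hCI : ∀ s t : ↥S, (SimpleGraph.fromEdgeSet (B \ F)).Reachable s t →
      (SimpleGraph.fromEdgeSet (B' \ F)).Reachable s t → s = t := by
    intro s t h1 h2
    by_contra hne
    have hne' : (s : V) ≠ t := fun h => hne (Subtype.ext h)
    obtain ⟨e, he1, he2, -⟩ := exists_common_edge hac Set.subset_union_left
      Set.subset_union_right hne' h1 h2
    exact (Set.disjoint_left.1 hdisj he1) he2
  have hedge : H.edgeSet = Set.range f := by
    apply Set.Subset.antisymm
    · intro e he
      induction e using Sym2.ind with
      | _ z z' =>
        obtain ⟨t, ht⟩ := (H.mem_edgeSet).1 he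
        exact ⟨t, ht.symm⟩
    · rintro e ⟨t, rfl⟩
      exact (H.mem_edgeSet).2 ⟨t, rfl⟩
  have hinjf : Function.Injective f := by
    intro s t h
    rw [hf, Sym2.eq_iff] at h
    rcases h with ⟨h1, h2⟩ | ⟨h1, h2⟩
    · exact hCI s t (Quotient.exact (Sum.inl.inj h1)) (Quotient.exact (Sum.inr.inj h2))
    · exact absurd h1 (by simp)
  -- local gluing lemma
  have hloc : ∀ (v : V) (r r' : ↥S),
      (SimpleGraph.fromEdgeSet (B \ F)).Reachable r v →
      (SimpleGraph.fromEdgeSet (B' \ F)).Reachable r' v →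
      H.Reachable (Sum.inl (Quotient.mk sX r)) (Sum.inr (Quotient.mk sY r')) := by
    intro v r r' hr hr'
    obtain ⟨w, hw1, hw2⟩ : ∃ w : ↥S,
        (SimpleGraph.fromEdgeSet (B \ F)).Reachable r w ∧
        (SimpleGraph.fromEdgeSet (B' \ F)).Reachable r' w := by
      by_cases hv : v ∈ S
      · exact ⟨⟨v, hv⟩, hr, hr'⟩
      · by_cases h1 : (r : V) = v
        · refine ⟨r, Reachable.refl _, ?_⟩
          rw [h1]; exact hr'
        · have hvX : v ∈ vertsOf (B \ F) := reach_mem_vertsOf hr h1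
          by_cases h2 : (r' : V) = v
          · refine ⟨r', ?_, Reachable.refl _⟩
            rw [h2]; exact hr
          · exact absurd (hcross v hvX (reach_mem_vertsOf hr' h2)) hv
    have e1 : Quotient.mk sX r = Quotient.mk sX w := Quotient.sound hw1
    have e2 : Quotient.mk sY r' = Quotient.mk sY w := Quotient.sound hw2
    rw [e1, e2]
    exact (hadj w).reachable
  -- connectivity
  have hpreXX : ∀ s t : ↥S,
      H.Reachable (Sum.inl (Quotient.mk sX s)) (Sum.inl (Quotient.mk sX t)) := by
    intro s t
    have main := reach_ind (Γ := SimpleGraph.fromEdgeSet ((B \ F) ∪ (B' \ F)))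
      (P := fun v =>
        (∀ r : ↥S, (SimpleGraph.fromEdgeSet (B \ F)).Reachable r v →
          H.Reachable (Sum.inl (Quotient.mk sX s)) (Sum.inl (Quotient.mk sX r))) ∧
        (∀ r : ↥S, (SimpleGraph.fromEdgeSet (B' \ F)).Reachable r v →
          H.Reachable (Sum.inl (Quotient.mk sX s)) (Sum.inr (Quotient.mk sY r))))
      ?_ (hTreach s t) ?_
    · exact main.1 t (Reachable.refl _)
    · -- step
      intro a b hPa hab
      rw [SimpleGraph.fromEdgeSet_adj] at hab
      obtain ⟨hmem, hne⟩ := hab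
      rcases hmem with hX | hY
      · have hedgeab : (SimpleGraph.fromEdgeSet (B \ F)).Reachable b a :=
          ((SimpleGraph.fromEdgeSet_adj _).2 ⟨hX, hne⟩).reachable.symm
        have hbv : b ∈ vertsOf (B \ F) := mem_vertsOf_right hX
        obtain ⟨rb, hrb⟩ := hrepX b hbv
        constructor
        · intro r hrB
          exact hPa.1 r (hrB.trans hedgeab)
        · intro r' hr'B
          exact (hPa.1 rb (hrb.trans hedgeab)).trans (hloc b rb r' hrb hr'B)
      · have hedgeab : (SimpleGraph.fromEdgeSet (B' \ F)).Reachable b a :=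
          ((SimpleGraph.fromEdgeSet_adj _).2 ⟨hY, hne⟩).reachable.symm
        have hbv : b ∈ vertsOf (B' \ F) := mem_vertsOf_right hY
        obtain ⟨rb, hrb⟩ := hrepY b hbv
        constructor
        · intro r hrB
          exact ((hPa.2 rb (hrb.trans hedgeab)).trans (hloc b r rb hrB hrb).symm)
        · intro r' hr'B
          exact hPa.2 r' (hr'B.trans hedgeab)
    · -- base at s
      constructor
      · intro r hrB
        rw [Quotient.sound (hrB : (reachSetoid (B \ F) S).r r s).symm]
      · intro r hrB
        exact hloc s s r (Reachable.refl _) hrB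
  have hconn : H.Connected := by
    rw [SimpleGraph.connected_iff]
    refine ⟨?_, ⟨Sum.inl (Quotient.mk sX hSne.some)⟩⟩
    intro z z'
    have reduce : ∀ z : Quotient sX ⊕ Quotient sY, ∃ s : ↥S,
        H.Reachable z (Sum.inl (Quotient.mk sX s)) := by
      intro z
      rcases z with c | d
      · obtain ⟨s, rfl⟩ := Quotient.exists_rep c
        exact ⟨s, Reachable.refl _⟩
      · obtain ⟨s, rfl⟩ := Quotient.exists_rep d
        exact ⟨s, (hadj s).reachable.symm⟩
    obtain ⟨a, ha⟩ := reduce z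
    obtain ⟨b, hb⟩ := reduce z'
    exact (ha.trans (hpreXX a b)).trans hb.symm
  -- acyclicity
  have hacH : H.IsAcyclic := by
    rw [SimpleGraph.isAcyclic_iff_forall_edge_isBridge]
    intro e he
    rw [hedge] at he
    obtain ⟨s₀, rfl⟩ := he
    show H.IsBridge s(Sum.inl (Quotient.mk sX s₀), Sum.inr (Quotient.mk sY s₀))
    rw [SimpleGraph.isBridge_iff]
    intro hr
    set T₀ := ((B \ F) ∪ (B' \ F)) \ {e' | e' ∈ B' \ F ∧ (s₀ : V) ∈ e'} with hT₀
    have hXT₀ : B \ F ⊆ T₀ := by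
      intro e' h
      exact ⟨Or.inl h, fun hD => (Set.disjoint_left.1 hdisj h) hD.1⟩
    have hYT₀ : ∀ e', e' ∈ B' \ F → (s₀ : V) ∉ e' → e' ∈ T₀ :=
      fun e' h hs => ⟨Or.inr h, fun hD => hs hD.2⟩
    have hKey : ∀ t : ↥S, (SimpleGraph.fromEdgeSet (B' \ F)).Reachable t s₀ → t ≠ s₀ →
        ¬ (SimpleGraph.fromEdgeSet T₀).Reachable s₀ t := by
      intro t hYt hne hR
      have hne' : (s₀ : V) ≠ t := fun h => hne (Subtype.ext h.symm)
      obtain ⟨e', he1, he2, he3⟩ := exists_common_edge hac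
        (Set.diff_subset) Set.subset_union_right hne' hR hYt.symm
      exact he1.2 ⟨he2, he3⟩
    -- transfer of reachability along Y-classes avoiding s₀
    have hiffY : ∀ t t' : ↥S, (SimpleGraph.fromEdgeSet (B' \ F)).Reachable t t' →
        ¬ (SimpleGraph.fromEdgeSet (B' \ F)).Reachable t s₀ →
        (SimpleGraph.fromEdgeSet T₀).Reachable t t' := by
      intro t t' hYr hnY
      obtain ⟨w⟩ := hYr
      have hs₀ : (s₀ : V) ∉ w.support := by
        intro hs
        exact hnY ⟨w.takeUntil _ hs⟩
      have hedges : ∀ e' ∈ w.edges, e' ∈ (SimpleGraph.fromEdgeSet T₀).edgeSet := by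
        intro e' he'
        have h1 := w.edges_subset_edgeSet he'
        rw [SimpleGraph.edgeSet_fromEdgeSet] at h1 ⊢
        refine ⟨hYT₀ e' h1.1 ?_, h1.2⟩
        intro hmem
        obtain ⟨b, rfl⟩ := Sym2.mem_iff_exists.1 hmem
        exact hs₀ (w.fst_mem_support_of_mem_edges he')
      exact ⟨w.transfer _ hedges⟩
    have hiffX : ∀ t t' : ↥S, (SimpleGraph.fromEdgeSet (B \ F)).Reachable t t' →
        (SimpleGraph.fromEdgeSet T₀).Reachable t t' :=
      fun t t' h => h.mono (SimpleGraph.fromEdgeSet_mono hXT₀)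
    -- invariant
    set P : (Quotient sX ⊕ Quotient sY) → Prop := fun z =>
      (∃ t : ↥S, z = Sum.inl (Quotient.mk sX t) ∧
        (SimpleGraph.fromEdgeSet T₀).Reachable s₀ t) ∨
      (∃ t : ↥S, z = Sum.inr (Quotient.mk sY t) ∧
        ¬ (SimpleGraph.fromEdgeSet (B' \ F)).Reachable t s₀ ∧
        (SimpleGraph.fromEdgeSet T₀).Reachable s₀ t) with hPdef
    have hPstart : P (Sum.inl (Quotient.mk sX s₀)) :=
      Or.inl ⟨s₀, rfl, Reachable.refl _⟩
    have hPend : ¬ P (Sum.inr (Quotient.mk sY s₀)) := by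
      rintro (⟨t, ht, -⟩ | ⟨t, ht, hn, -⟩)
      · exact absurd ht (by simp)
      · exact hn (Quotient.exact (Sum.inr.inj ht)).symm
    have hstep : ∀ z z', P z →
        (H.deleteEdges {s(Sum.inl (Quotient.mk sX s₀), Sum.inr (Quotient.mk sY s₀))}).Adj z z' →
        P z' := by
      intro z z' hPz hzz
      rw [SimpleGraph.deleteEdges_adj] at hzz
      obtain ⟨⟨t, ht⟩, hnot⟩ := hzz
      have hzne : z ≠ z' := (show H.Adj z z' from ⟨t, ht⟩).ne
      have htne : t ≠ s₀ := by
        intro h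
        subst h
        exact hnot (by rw [ht]; exact rfl)
      rw [Sym2.eq_iff] at ht
      rcases ht with ⟨h1, h2⟩ | ⟨h1, h2⟩
      · -- z = inl (mk t), z' = inr (mk t)
        rcases hPz with ⟨t'', ht'', hR⟩ | ⟨t'', ht'', -, -⟩
        · have hXrel : (SimpleGraph.fromEdgeSet (B \ F)).Reachable t'' t :=
            Quotient.exact (Sum.inl.inj (ht''.symm.trans h1))
          have hR₀t : (SimpleGraph.fromEdgeSet T₀).Reachable s₀ t :=
            hR.trans (hiffX t'' t hXrel)
          refine Or.inr ⟨t, h2, ?_, hR₀t⟩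
          intro hRY
          exact hKey t hRY htne hR₀t
        · rw [h1] at ht''
          exact absurd ht'' (by simp)
      · -- z = inr (mk t), z' = inl (mk t)
        rcases hPz with ⟨t'', ht'', -⟩ | ⟨t'', ht'', hn, hR⟩
        · rw [h1] at ht''
          exact absurd ht'' (by simp)
        · have hYrel : (SimpleGraph.fromEdgeSet (B' \ F)).Reachable t'' t :=
            Quotient.exact (Sum.inr.inj (ht''.symm.trans h1))
          refine Or.inl ⟨t, h2, hR.trans (hiffY t'' t hYrel hn)⟩
    exact hPend (reach_ind hstep hr hPstart)
  -- counting
  letI : Fintype (Quotient sX ⊕ Quotient sY) := Fintype.ofFinite _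
  letI : Finite (Sym2 (Quotient sX ⊕ Quotient sY)) :=
    Finite.of_surjective
      (fun x : (Quotient sX ⊕ Quotient sY) × (Quotient sX ⊕ Quotient sY) => s(x.1, x.2))
      (fun z => Sym2.ind (fun x y => ⟨(x, y), rfl⟩) z)
  letI : Fintype ↥H.edgeSet := Fintype.ofFinite _
  have hcard := SimpleGraph.IsTree.card_edgeFinset ⟨hconn, hacH⟩
  have e2 : Fintype.card (Quotient sX ⊕ Quotient sY) =
      Nat.card (Quotient sX) + Nat.card (Quotient sY) := by
    rw [← Nat.card_eq_fintype_card, Nat.card_sum]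
  have e3 : H.edgeFinset.card = S.ncard := by
    have hb : Function.Bijective (fun t : ↥S => (⟨f t, by rw [hedge]; exact ⟨t, rfl⟩⟩ : ↥H.edgeSet)) := by
      constructor
      · intro a b hab
        exact hinjf (congrArg Subtype.val hab)
      · rintro ⟨e, he⟩
        rw [hedge] at he
        obtain ⟨t, rfl⟩ := he
        exact ⟨t, rfl⟩
    have := Nat.card_eq_of_bijective _ hb
    rw [Nat.card_coe_set_eq, Nat.card_coe_set_eq] at this
    rw [this, ← SimpleGraph.coe_edgeFinset, Set.ncard_coe_finset]
  omega

end KappaAux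

/-- In a 2-connected finitely separable graph `G` with finite-cycle matroid
`M`, if `X ⊆ E(G)`, `Y = E(G) \ X`, `V[X] ∩ V[Y]` is finite and both subgraphs `(V[X], X)`
and `(V[Y], Y)` are connected (i.e. `c(X) = c(Y) = 1`), then `κ_M(X) = |V[X] ∩ V[Y]| - 1`:
every set `F` arising in the definition of `κ_M(X)` is finite with
`|F| + 1 = |V[X] ∩ V[Y]|`. -/
theorem kappa_eq_of_connected_sides {V : Type*} (G : SimpleGraph V) (h2 : TwoConnected G)
    (hfs : FinitelySeparable G) (M : Matroid (Sym2 V)) (hM : IsFiniteCycleMatroid G M)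
    (X Y : Set (Sym2 V)) (hX : X ⊆ G.edgeSet) (hY : Y = G.edgeSet \ X)
    (hfin : (vertsOf X ∩ vertsOf Y).Finite)
    (hXconn : SubConnected X) (hYconn : SubConnected Y) :
    ∀ F, ConnWitness M X F → F.Finite ∧ F.ncard + 1 = (vertsOf X ∩ vertsOf Y).ncard := by
  classical
  intro F hF
  obtain ⟨B, B', hB, hB', hFsub, hTbase⟩ := hF
  have hE := hM.1
  have hYsub : Y ⊆ G.edgeSet := by rw [hY]; exact Set.diff_subset
  have hMEX : M.E \ X = Y := by rw [hE, hY]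
  have hBsub : B ⊆ X := hB.subset_ground
  have hBindep : M.Indep B := (Matroid.restrict_indep_iff.1 hB.indep).1
  have hB'sub : B' ⊆ Y := by
    have := hB'.subset_ground
    rwa [Matroid.restrict_ground_eq, hMEX] at this
  have hB'indep : M.Indep B' := (Matroid.restrict_indep_iff.1 hB'.indep).1
  have hTindep : M.Indep ((B ∪ B') \ F) := hTbase.indep
  have hTsub : (B ∪ B') \ F ⊆ G.edgeSet :=
    Set.diff_subset.trans (Set.union_subset (hBsub.trans hX) (hB'sub.trans hYsub))
  have hdisjXY : Disjoint X Y := by rw [hY]; exact disjoint_sdiff_right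
  have hdisjBB' : Disjoint B B' := hdisjXY.mono hBsub hB'sub
  have hmaxB : ∀ e ∈ X, e ∉ B → ¬ M.Indep (insert e B) := by
    intro e he hnB hind
    exact (hB.insert_dep ⟨he, hnB⟩).not_indep
      (Matroid.restrict_indep_iff.2 ⟨hind, Set.insert_subset he hBsub⟩)
  have hmaxB' : ∀ e ∈ Y, e ∉ B' → ¬ M.Indep (insert e B') := by
    intro e he hnB hind
    refine (hB'.insert_dep ⟨?_, hnB⟩).not_indep
      (Matroid.restrict_indep_iff.2 ⟨hind, Set.insert_subset ?_ hB'.subset_ground⟩)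
    · show e ∈ M.E \ X
      rw [hMEX]; exact he
    · show e ∈ M.E \ X
      rw [hMEX]; exact he
  have hmaxT : ∀ e ∈ G.edgeSet, e ∉ (B ∪ B') \ F → ¬ M.Indep (insert e ((B ∪ B') \ F)) := by
    intro e he hn hind
    exact (hTbase.insert_dep ⟨by rw [hE]; exact he, hn⟩).not_indep hind
  have hstepB := KappaAux.base_step hM hBindep hBsub hX hmaxB
  have hstepB' := KappaAux.base_step hM hB'indep hB'sub hYsub hmaxB'
  have hstepT := KappaAux.base_step hM hTindep hTsub subset_rfl hmaxT
  have hTreach : ∀ a b : V, (SimpleGraph.fromEdgeSet ((B ∪ B') \ F)).Reachable a b := by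
    intro a b
    refine KappaAux.reach_step (Γ := G) ?_ (h2.1.preconnected a b)
    intro u v huv
    exact hstepT u v ((G.mem_edgeSet).2 huv)
  have hTeq : (B ∪ B') \ F = (B \ F) ∪ (B' \ F) := Set.union_diff_distrib
  have hTreach' : ∀ a b : V,
      (SimpleGraph.fromEdgeSet ((B \ F) ∪ (B' \ F))).Reachable a b := hTeq ▸ hTreach
  have hVX : vertsOf X ⊆ vertsOf B := by
    intro v hv
    obtain ⟨e, heX, hve⟩ := hv
    obtain ⟨u, rfl⟩ := Sym2.mem_iff_exists.1 hve
    have hne : v ≠ u := fun h =>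
      G.not_isDiag_of_mem_edgeSet (hX heX) ((Sym2.mk_isDiag_iff).2 h)
    exact KappaAux.reach_mem_vertsOf (hstepB v u heX).symm (Ne.symm hne)
  have hVY : vertsOf Y ⊆ vertsOf B' := by
    intro v hv
    obtain ⟨e, heY, hve⟩ := hv
    obtain ⟨u, rfl⟩ := Sym2.mem_iff_exists.1 hve
    have hne : v ≠ u := fun h =>
      G.not_isDiag_of_mem_edgeSet (hYsub heY) ((Sym2.mk_isDiag_iff).2 h)
    exact KappaAux.reach_mem_vertsOf (hstepB' v u heY).symm (Ne.symm hne)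
  have hCompX : ∀ v ∈ vertsOf X, ∃ s ∈ vertsOf X ∩ vertsOf Y,
      (SimpleGraph.fromEdgeSet (B \ F)).Reachable s v :=
    KappaAux.comp_meets_S hBsub hB'sub hTreach' hYconn.1
  have hCompY : ∀ v ∈ vertsOf Y, ∃ s ∈ vertsOf X ∩ vertsOf Y,
      (SimpleGraph.fromEdgeSet (B' \ F)).Reachable s v := by
    intro v hv
    obtain ⟨s, hs, hr⟩ := KappaAux.comp_meets_S hB'sub hBsub
      (fun a b => by rw [Set.union_comm]; exact hTreach' a b) hXconn.1 v hv
    exact ⟨s, ⟨hs.2, hs.1⟩, hr⟩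
  set S := vertsOf X ∩ vertsOf Y with hSdef
  have hSfin : S.Finite := hfin
  have hSne : S.Nonempty := by
    obtain ⟨v, hv⟩ := hXconn.1
    obtain ⟨t, ht, -⟩ := hCompX v hv
    exact ⟨t, ht⟩
  have hSneT : Nonempty ↥S := hSne.to_subtype
  have hacB := KappaAux.indep_isAcyclic hM hBindep
  have hacB' := KappaAux.indep_isAcyclic hM hB'indep
  have hacT : (SimpleGraph.fromEdgeSet ((B \ F) ∪ (B' \ F))).IsAcyclic :=
    hTeq ▸ KappaAux.indep_isAcyclic hM hTindep
  have hdiagB : ∀ e ∈ B, ¬ e.IsDiag := fun e he =>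
    G.not_isDiag_of_mem_edgeSet (hX (hBsub he))
  have hdiagB' : ∀ e ∈ B', ¬ e.IsDiag := fun e he =>
    G.not_isDiag_of_mem_edgeSet (hYsub (hB'sub he))
  have hrepB : ∀ v ∈ vertsOf B, ∃ s : ↥S,
      (SimpleGraph.fromEdgeSet (B \ F)).Reachable s v := by
    intro v hv
    obtain ⟨t, ht, hr⟩ := hCompX v (KappaAux.vertsOf_mono hBsub hv)
    exact ⟨⟨t, ht⟩, hr⟩
  have hrepB' : ∀ v ∈ vertsOf B', ∃ s : ↥S,
      (SimpleGraph.fromEdgeSet (B' \ F)).Reachable s v := by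
    intro v hv
    obtain ⟨t, ht, hr⟩ := hCompY v (KappaAux.vertsOf_mono hB'sub hv)
    exact ⟨⟨t, ht⟩, hr⟩
  have hSB : ∀ s : ↥S, (s : V) ∈ vertsOf B := fun s => hVX s.2.1
  have hSB' : ∀ s : ↥S, (s : V) ∈ vertsOf B' := fun s => hVY s.2.2
  have hreachB : ∀ s t : ↥S, (SimpleGraph.fromEdgeSet B).Reachable s t := by
    intro s t
    refine KappaAux.reach_step (Γ := SimpleGraph.fromEdgeSet X) ?_
      (hXconn.2 s.1 s.2.1 t.1 t.2.1)
    intro u v huv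
    rw [SimpleGraph.fromEdgeSet_adj] at huv
    exact hstepB u v huv.1
  have hreachB' : ∀ s t : ↥S, (SimpleGraph.fromEdgeSet B').Reachable s t := by
    intro s t
    refine KappaAux.reach_step (Γ := SimpleGraph.fromEdgeSet Y) ?_
      (hYconn.2 s.1 s.2.2 t.1 t.2.2)
    intro u v huv
    rw [SimpleGraph.fromEdgeSet_adj] at huv
    exact hstepB' u v huv.1
  obtain ⟨hfinFB, hqX⟩ := KappaAux.sideCount hSfin hSneT hacB hdiagB hrepB hSB hreachB
  obtain ⟨hfinFB', hqY⟩ := KappaAux.sideCount hSfin hSneT hacB' hdiagB' hrepB' hSB' hreachB'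
  have hdisjBF : Disjoint (B \ F) (B' \ F) :=
    hdisjBB'.mono Set.diff_subset Set.diff_subset
  have hrepX' : ∀ v ∈ vertsOf (B \ F), ∃ s : ↥S,
      (SimpleGraph.fromEdgeSet (B \ F)).Reachable s v :=
    fun v hv => hrepB v (KappaAux.vertsOf_mono Set.diff_subset hv)
  have hrepY' : ∀ v ∈ vertsOf (B' \ F), ∃ s : ↥S,
      (SimpleGraph.fromEdgeSet (B' \ F)).Reachable s v :=
    fun v hv => hrepB' v (KappaAux.vertsOf_mono Set.diff_subset hv)
  have hcross : ∀ v, v ∈ vertsOf (B \ F) → v ∈ vertsOf (B' \ F) → v ∈ S :=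
    fun v h1 h2 =>
      ⟨KappaAux.vertsOf_mono (Set.diff_subset.trans hBsub) h1,
       KappaAux.vertsOf_mono (Set.diff_subset.trans hB'sub) h2⟩
  have hmain := KappaAux.mainCount hSfin hSneT hacT hTreach' hdisjBF hrepX' hrepY' hcross
  have hFsplit : (F ∩ B) ∪ (F ∩ B') = F := by
    rw [← Set.inter_union_distrib_left, Set.inter_eq_self_of_subset_left hFsub]
  have hFfin : F.Finite := by rw [← hFsplit]; exact hfinFB.union hfinFB'
  have hdisjF : Disjoint (F ∩ B) (F ∩ B') :=
    hdisjBB'.mono Set.inter_subset_right Set.inter_subset_right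
  have hcardF : F.ncard = (F ∩ B).ncard + (F ∩ B').ncard := by
    rw [← Set.ncard_union_eq hdisjF hfinFB hfinFB', hFsplit]
  exact ⟨hFfin, by omega⟩
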